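/- Let F be an algebraically closed field, n > 1 an integer, and γ ∈ F. For x in the split octonion algebra O over F, the equation x^n = γ·1 holds if and only if one of the following holds: (i) there exists ξ₁ ∈ F with ξ₁^n = γ and x = ξ₁·1; (ii) there exist ξ₁ ≠ ξ₂ in F with ξ₁^n = ξ₂^n = γ and an F-algebra automorphism g of O with x = g(ξ₁·e₁ + ξ₂·e₂); (iii) the image of n in F is zero or γ = 0, and there exist ξ₁ ∈ F with ξ₁^n = γ and an F-algebra automorphism g of O with x = g(ξ₁·1 + u₁). -/

import Mathlib

/-!
Every octonion satisfies `x * x = trO x • x - normO x • 1`. Automorphisms — `SL₃(F)` acting by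
`u ↦ A u`, `v ↦ (A⁻¹)ᵀ v`, the swap `(α, u; v, β) ↦ (β, -v; -u, α)`, and shears of the quaternion
subalgebra `M₂(F)` — move any non-scalar `x` to the companion element
`(0, (1,0,0); (-normO x, 0, 0), trO x)`, and they preserve trace and norm; so two non-scalar
octonions are conjugate exactly when their traces and norms agree. Over an algebraically closed
field a root `ξ` of `X² - trO x • X + normO x` makes `x` conjugate to `ξ • e₁ + (trO x - ξ) • e₂`
when the two roots differ and to `ξ • 1 + u₁` otherwise; the `n`-th powers of these are
`ξ₁ⁿ • e₁ + ξ₂ⁿ • e₂` and `ξⁿ • 1 + n ξⁿ⁻¹ • u₁`.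
-/

noncomputable section

/-- The split octonion algebra over `F`, given by Zorn vector matrices
`(x1, u; v, x2)` with `x1, x2 ∈ F` and `u, v ∈ F³`. -/
@[ext]
structure SplitOctonion (F : Type*) where
  x1 : F
  u : Fin 3 → F
  v : Fin 3 → F
  x2 : F

namespace SplitOctonion

variable {F : Type*} [Field F]

/-- Dot product on `F³`. -/
def dot (x y : Fin 3 → F) : F := x 0 * y 0 + x 1 * y 1 + x 2 * y 2

/-- Cross product on `F³`. -/
def cross (x y : Fin 3 → F) : Fin 3 → F :=
  ![x 1 * y 2 - x 2 * y 1, x 2 * y 0 - x 0 * y 2, x 0 * y 1 - x 1 * y 0]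

instance : Zero (SplitOctonion F) := ⟨⟨0, 0, 0, 0⟩⟩
instance : One (SplitOctonion F) := ⟨⟨1, 0, 0, 1⟩⟩
instance : Add (SplitOctonion F) :=
  ⟨fun x y => ⟨x.x1 + y.x1, x.u + y.u, x.v + y.v, x.x2 + y.x2⟩⟩
instance : Neg (SplitOctonion F) := ⟨fun x => ⟨-x.x1, -x.u, -x.v, -x.x2⟩⟩
instance : SMul F (SplitOctonion F) :=
  ⟨fun c x => ⟨c * x.x1, c • x.u, c • x.v, c * x.x2⟩⟩

/-- Zorn vector matrix multiplication. -/
instance : Mul (SplitOctonion F) :=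
  ⟨fun x y => ⟨x.x1 * y.x1 + dot x.u y.v,
    x.x1 • y.u + y.x2 • x.u - cross x.v y.v,
    y.x1 • x.v + x.x2 • y.v + cross x.u y.u,
    x.x2 * y.x2 + dot x.v y.u⟩⟩

@[simp] lemma zero_x1 : (0 : SplitOctonion F).x1 = 0 := rfl
@[simp] lemma zero_u : (0 : SplitOctonion F).u = 0 := rfl
@[simp] lemma zero_v : (0 : SplitOctonion F).v = 0 := rfl
@[simp] lemma zero_x2 : (0 : SplitOctonion F).x2 = 0 := rfl
@[simp] lemma add_x1 (x y : SplitOctonion F) : (x + y).x1 = x.x1 + y.x1 := rfl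
@[simp] lemma add_u (x y : SplitOctonion F) : (x + y).u = x.u + y.u := rfl
@[simp] lemma add_v (x y : SplitOctonion F) : (x + y).v = x.v + y.v := rfl
@[simp] lemma add_x2 (x y : SplitOctonion F) : (x + y).x2 = x.x2 + y.x2 := rfl
@[simp] lemma neg_x1 (x : SplitOctonion F) : (-x).x1 = -x.x1 := rfl
@[simp] lemma neg_u (x : SplitOctonion F) : (-x).u = -x.u := rfl
@[simp] lemma neg_v (x : SplitOctonion F) : (-x).v = -x.v := rfl
@[simp] lemma neg_x2 (x : SplitOctonion F) : (-x).x2 = -x.x2 := rfl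
@[simp] lemma smul_x1 (c : F) (x : SplitOctonion F) : (c • x).x1 = c * x.x1 := rfl
@[simp] lemma smul_u (c : F) (x : SplitOctonion F) : (c • x).u = c • x.u := rfl
@[simp] lemma smul_v (c : F) (x : SplitOctonion F) : (c • x).v = c • x.v := rfl
@[simp] lemma smul_x2 (c : F) (x : SplitOctonion F) : (c • x).x2 = c * x.x2 := rfl

instance : AddCommGroup (SplitOctonion F) where
  add_assoc x y z := by ext <;> simp [add_assoc]
  zero_add x := by ext <;> simp
  add_zero x := by ext <;> simp
  add_comm x y := by ext <;> simp [add_comm]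
  neg_add_cancel x := by ext <;> simp
  nsmul := nsmulRec
  zsmul := zsmulRec

instance : Module F (SplitOctonion F) where
  one_smul x := by ext <;> simp
  mul_smul c d x := by ext <;> simp [mul_assoc, mul_smul]
  smul_zero c := by ext <;> simp
  smul_add c x y := by ext <;> simp [mul_add, smul_add]
  add_smul c d x := by ext <;> simp [add_mul, add_smul]
  zero_smul x := by ext <;> simp

/-- Powers of a single octonion (well defined by power-associativity). -/
def npow (x : SplitOctonion F) : ℕ → SplitOctonion F
  | 0 => 1
  | n + 1 => npow x n * x

instance : Pow (SplitOctonion F) ℕ := ⟨npow⟩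

/-- Substitution of an octonion into a polynomial over `F`:
`f(x) = αₙ xⁿ + ⋯ + α₁ x + α₀ • 1`. -/
def peval (f : Polynomial F) (x : SplitOctonion F) : SplitOctonion F :=
  f.sum fun i c => c • x ^ i

/-- The octonion `e₁`. -/
def e1 : SplitOctonion F := ⟨1, 0, 0, 0⟩
/-- The octonion `e₂`. -/
def e2 : SplitOctonion F := ⟨0, 0, 0, 1⟩
/-- The octonion `u₁`. -/
def u1 : SplitOctonion F := ⟨0, ![1, 0, 0], 0, 0⟩

/-- Conjugation on `O`. -/
def conj (x : SplitOctonion F) : SplitOctonion F := ⟨x.x2, -x.u, -x.v, x.x1⟩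

/-- The norm of an octonion. -/
def normO (x : SplitOctonion F) : F := x.x1 * x.x2 - dot x.u x.v

/-- The trace of an octonion. -/
def trO (x : SplitOctonion F) : F := x.x1 + x.x2

/-- `g` is an `F`-algebra automorphism of `O`: a linear bijection preserving
multiplication (and the unit). -/
def IsAlgAut (g : SplitOctonion F ≃ₗ[F] SplitOctonion F) : Prop :=
  g 1 = 1 ∧ ∀ x y, g (x * y) = g x * g y

end SplitOctonion

open Matrix

namespace SplitOctonion

variable {F : Type*}

lemma ext_coords {x y : SplitOctonion F} (h1 : x.x1 = y.x1)
    (hu0 : x.u 0 = y.u 0) (hu1 : x.u 1 = y.u 1) (hu2 : x.u 2 = y.u 2)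
    (hv0 : x.v 0 = y.v 0) (hv1 : x.v 1 = y.v 1) (hv2 : x.v 2 = y.v 2) (h2 : x.x2 = y.x2) :
    x = y := by
  ext i <;> first | assumption | fin_cases i <;> assumption

variable [Field F]

@[simp] lemma one_x1 : (1 : SplitOctonion F).x1 = 1 := rfl
@[simp] lemma one_u : (1 : SplitOctonion F).u = 0 := rfl
@[simp] lemma one_v : (1 : SplitOctonion F).v = 0 := rfl
@[simp] lemma one_x2 : (1 : SplitOctonion F).x2 = 1 := rfl
@[simp] lemma sub_x1 (x y : SplitOctonion F) : (x - y).x1 = x.x1 - y.x1 := by simp [sub_eq_add_neg]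
@[simp] lemma sub_u (x y : SplitOctonion F) : (x - y).u = x.u - y.u := by simp [sub_eq_add_neg]
@[simp] lemma sub_v (x y : SplitOctonion F) : (x - y).v = x.v - y.v := by simp [sub_eq_add_neg]
@[simp] lemma sub_x2 (x y : SplitOctonion F) : (x - y).x2 = x.x2 - y.x2 := by simp [sub_eq_add_neg]

lemma mul_x1 (x y : SplitOctonion F) : (x * y).x1 = x.x1 * y.x1 + dot x.u y.v := rfl
lemma mul_u (x y : SplitOctonion F) :
    (x * y).u = x.x1 • y.u + y.x2 • x.u - cross x.v y.v := rfl
lemma mul_v (x y : SplitOctonion F) :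
    (x * y).v = y.x1 • x.v + x.x2 • y.v + cross x.u y.u := rfl
lemma mul_x2 (x y : SplitOctonion F) : (x * y).x2 = x.x2 * y.x2 + dot x.v y.u := rfl

@[simp] lemma mul_x1' (x y : SplitOctonion F) :
    (x * y).x1 = x.x1 * y.x1 + (x.u 0 * y.v 0 + x.u 1 * y.v 1 + x.u 2 * y.v 2) := rfl
@[simp] lemma mul_u0 (x y : SplitOctonion F) :
    (x * y).u 0 = x.x1 * y.u 0 + y.x2 * x.u 0 - (x.v 1 * y.v 2 - x.v 2 * y.v 1) := rfl
@[simp] lemma mul_u1 (x y : SplitOctonion F) :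
    (x * y).u 1 = x.x1 * y.u 1 + y.x2 * x.u 1 - (x.v 2 * y.v 0 - x.v 0 * y.v 2) := rfl
@[simp] lemma mul_u2 (x y : SplitOctonion F) :
    (x * y).u 2 = x.x1 * y.u 2 + y.x2 * x.u 2 - (x.v 0 * y.v 1 - x.v 1 * y.v 0) := rfl
@[simp] lemma mul_v0 (x y : SplitOctonion F) :
    (x * y).v 0 = y.x1 * x.v 0 + x.x2 * y.v 0 + (x.u 1 * y.u 2 - x.u 2 * y.u 1) := rfl
@[simp] lemma mul_v1 (x y : SplitOctonion F) :
    (x * y).v 1 = y.x1 * x.v 1 + x.x2 * y.v 1 + (x.u 2 * y.u 0 - x.u 0 * y.u 2) := rfl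
@[simp] lemma mul_v2 (x y : SplitOctonion F) :
    (x * y).v 2 = y.x1 * x.v 2 + x.x2 * y.v 2 + (x.u 0 * y.u 1 - x.u 1 * y.u 0) := rfl
@[simp] lemma mul_x2' (x y : SplitOctonion F) :
    (x * y).x2 = x.x2 * y.x2 + (x.v 0 * y.u 0 + x.v 1 * y.u 1 + x.v 2 * y.u 2) := rfl

@[simp] lemma e1_x1 : (e1 : SplitOctonion F).x1 = 1 := rfl
@[simp] lemma e1_u : (e1 : SplitOctonion F).u = 0 := rfl
@[simp] lemma e1_v : (e1 : SplitOctonion F).v = 0 := rfl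
@[simp] lemma e1_x2 : (e1 : SplitOctonion F).x2 = 0 := rfl
@[simp] lemma e2_x1 : (e2 : SplitOctonion F).x1 = 0 := rfl
@[simp] lemma e2_u : (e2 : SplitOctonion F).u = 0 := rfl
@[simp] lemma e2_v : (e2 : SplitOctonion F).v = 0 := rfl
@[simp] lemma e2_x2 : (e2 : SplitOctonion F).x2 = 1 := rfl
@[simp] lemma u1_x1 : (u1 : SplitOctonion F).x1 = 0 := rfl
@[simp] lemma u1_u : (u1 : SplitOctonion F).u = ![1, 0, 0] := rfl
@[simp] lemma u1_v : (u1 : SplitOctonion F).v = 0 := rfl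
@[simp] lemma u1_x2 : (u1 : SplitOctonion F).x2 = 0 := rfl

protected lemma pow_zero (x : SplitOctonion F) : x ^ 0 = 1 := rfl
protected lemma pow_succ (x : SplitOctonion F) (k : ℕ) : x ^ (k + 1) = x ^ k * x := rfl

lemma mul_self_eq (x : SplitOctonion F) : x * x = trO x • x - normO x • 1 := by
  apply ext_coords <;> simp [trO, normO, dot] <;> ring

lemma smul_one_inj {a b : F} : a • (1 : SplitOctonion F) = b • 1 ↔ a = b :=
  ⟨fun h => by simpa using congrArg x1 h, fun h => h ▸ rfl⟩

def IsScalar (x : SplitOctonion F) : Prop := ∃ c : F, x = c • 1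

lemma eq_zero_of_smul_eq_smul_one {x : SplitOctonion F} (hx : ¬IsScalar x) {a b : F}
    (h : a • x = b • 1) : a = 0 ∧ b = 0 := by
  have ha : a = 0 := by
    by_contra ha
    exact hx ⟨a⁻¹ * b, by rw [← smul_smul, ← h, smul_smul, inv_mul_cancel₀ ha, one_smul]⟩
  refine ⟨ha, ?_⟩
  rw [ha, zero_smul] at h
  simpa using congrArg x1 h.symm

lemma trO_eq_and_normO_eq_of_mul_self {x : SplitOctonion F} (hx : ¬IsScalar x) {t q : F}
    (h : x * x = t • x - q • 1) : trO x = t ∧ normO x = q := by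
  have h' : (trO x - t) • x = (normO x - q) • (1 : SplitOctonion F) := by
    rw [mul_self_eq] at h
    linear_combination (norm := module) h
  obtain ⟨ht, hq⟩ := eq_zero_of_smul_eq_smul_one hx h'
  exact ⟨sub_eq_zero.1 ht, sub_eq_zero.1 hq⟩

namespace IsAlgAut

variable {g : SplitOctonion F ≃ₗ[F] SplitOctonion F}

lemma map_smul_one (hg : IsAlgAut g) (c : F) : g (c • 1) = c • 1 := by
  rw [map_smul, hg.1]

lemma map_pow (hg : IsAlgAut g) (z : SplitOctonion F) : ∀ k : ℕ, g (z ^ k) = g z ^ k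
  | 0 => hg.1
  | k + 1 => by rw [SplitOctonion.pow_succ, hg.2, map_pow hg z k, SplitOctonion.pow_succ]

end IsAlgAut

def AutConj (x y : SplitOctonion F) : Prop :=
  ∃ g : SplitOctonion F ≃ₗ[F] SplitOctonion F, IsAlgAut g ∧ y = g x

namespace AutConj

lemma refl (x : SplitOctonion F) : AutConj x x :=
  ⟨LinearEquiv.refl F _, ⟨rfl, fun _ _ => rfl⟩, rfl⟩

lemma symm {x y : SplitOctonion F} (h : AutConj x y) : AutConj y x := by
  obtain ⟨g, ⟨h1, hmul⟩, rfl⟩ := h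
  refine ⟨g.symm, ⟨g.symm_apply_eq.2 h1.symm, fun a b => g.symm_apply_eq.2 ?_⟩,
    (g.symm_apply_apply x).symm⟩
  rw [hmul, g.apply_symm_apply, g.apply_symm_apply]

lemma trans {x y z : SplitOctonion F} (h : AutConj x y) (h' : AutConj y z) :
    AutConj x z := by
  obtain ⟨g, ⟨h1, hmul⟩, rfl⟩ := h
  obtain ⟨g', ⟨h1', hmul'⟩, rfl⟩ := h'
  exact ⟨g.trans g', ⟨by simp [h1, h1'], fun a b => by simp [hmul, hmul']⟩, rfl⟩

lemma trO_eq_and_normO_eq {x y : SplitOctonion F} (h : AutConj x y) :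
    trO y = trO x ∧ normO y = normO x := by
  obtain ⟨g, hg, rfl⟩ := h
  by_cases hx : IsScalar x
  · obtain ⟨c, rfl⟩ := hx
    rw [hg.map_smul_one]
    exact ⟨rfl, rfl⟩
  have hgx : ¬IsScalar (g x) := fun ⟨c, hc⟩ =>
    hx ⟨c, g.injective (hc.trans (hg.map_smul_one c).symm)⟩
  refine trO_eq_and_normO_eq_of_mul_self hgx ?_
  rw [← hg.2, mul_self_eq, map_sub, map_smul, hg.map_smul_one]

lemma pow_eq_smul_one_iff {z x : SplitOctonion F} (h : AutConj z x) (n : ℕ) (γ : F) :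
    x ^ n = γ • 1 ↔ z ^ n = γ • 1 := by
  obtain ⟨g, hg, rfl⟩ := h
  conv_lhs => rw [← hg.map_pow, ← hg.map_smul_one]
  exact g.injective.eq_iff

end AutConj

def swap (x : SplitOctonion F) : SplitOctonion F := ⟨x.x2, -x.v, -x.u, x.x1⟩

def swapEquiv : SplitOctonion F ≃ₗ[F] SplitOctonion F where
  toFun := swap
  invFun := swap
  map_add' x y := by apply ext_coords <;> simp [swap] <;> ring
  map_smul' c x := by apply ext_coords <;> simp [swap]
  left_inv x := by apply ext_coords <;> simp [swap]
  right_inv x := by apply ext_coords <;> simp [swap]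

lemma isAlgAut_swapEquiv : IsAlgAut (swapEquiv : SplitOctonion F ≃ₗ[F] SplitOctonion F) :=
  ⟨by apply ext_coords <;> simp [swapEquiv, swap],
    fun x y => by apply ext_coords <;> simp [swapEquiv, swap] <;> ring⟩

lemma autConj_swap (x : SplitOctonion F) : AutConj x (swap x) :=
  ⟨swapEquiv, isAlgAut_swapEquiv, rfl⟩

/-- On the quaternion subalgebra of the elements `(α, (a,0,0); (b,0,0), β)`, which is `M₂(F)`
via `[[α, a], [b, β]]`, this is conjugation by `[[1, 0], [c, 1]]`. -/
def shear (c : F) (x : SplitOctonion F) : SplitOctonion F :=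
  ⟨x.x1 - c * x.u 0,
    ![x.u 0, x.u 1 - c * x.v 2, x.u 2 + c * x.u 1 + c * x.v 1 - c ^ 2 * x.v 2],
    ![x.v 0 + c * (x.x1 - x.x2) - c ^ 2 * x.u 0, x.v 1 - c * x.v 2, x.v 2],
    x.x2 + c * x.u 0⟩

def shearEquiv (c : F) : SplitOctonion F ≃ₗ[F] SplitOctonion F where
  toFun := shear c
  invFun := shear (-c)
  map_add' x y := by apply ext_coords <;> simp [shear] <;> ring
  map_smul' a x := by apply ext_coords <;> simp [shear] <;> ring
  left_inv x := by apply ext_coords <;> simp [shear] <;> ring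
  right_inv x := by apply ext_coords <;> simp [shear] <;> ring

lemma isAlgAut_shearEquiv (c : F) : IsAlgAut (shearEquiv c) :=
  ⟨by apply ext_coords <;> simp [shearEquiv, shear],
    fun x y => by apply ext_coords <;> simp [shearEquiv, shear] <;> ring⟩

lemma autConj_shear (c : F) (x : SplitOctonion F) : AutConj x (shear c x) :=
  ⟨shearEquiv c, isAlgAut_shearEquiv c, rfl⟩

lemma dot_eq_dotProduct (x y : Fin 3 → F) : dot x y = x ⬝ᵥ y := by
  simp [dot, dotProduct, Fin.sum_univ_three]

lemma dot_comm (x y : Fin 3 → F) : dot x y = dot y x := by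
  simp only [dot]; ring

lemma cross_mulVec (M : Matrix (Fin 3) (Fin 3) F) (x y : Fin 3 → F) :
    cross (M *ᵥ x) (M *ᵥ y) = (adjugate M)ᵀ *ᵥ cross x y := by
  ext i
  fin_cases i <;> simp [cross, adjugate_fin_three, mulVec, dotProduct, Fin.sum_univ_three] <;> ring

lemma dot_mulVec_adjugate_transpose_mulVec {A : Matrix (Fin 3) (Fin 3) F} (hA : A.det = 1)
    (x y : Fin 3 → F) : dot (A *ᵥ x) ((adjugate A)ᵀ *ᵥ y) = dot x y := by
  rw [dot_eq_dotProduct, dot_eq_dotProduct, mulVec_transpose, dotProduct_comm,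
    dotProduct_mulVec, vecMul_vecMul, adjugate_mul, hA, one_smul, vecMul_one, dotProduct_comm]

def slAction (A : Matrix (Fin 3) (Fin 3) F) (x : SplitOctonion F) : SplitOctonion F :=
  ⟨x.x1, A *ᵥ x.u, (adjugate A)ᵀ *ᵥ x.v, x.x2⟩

lemma slAction_adjugate {A : Matrix (Fin 3) (Fin 3) F} (hA : A.det = 1) (x : SplitOctonion F) :
    slAction (adjugate A) (slAction A x) = x := by
  ext <;> simp only [slAction, mulVec_mulVec, adjugate_adjugate' A, ← transpose_mul, adjugate_mul,
    hA, one_pow, one_smul, transpose_one, one_mulVec]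

def slEquiv {A : Matrix (Fin 3) (Fin 3) F} (hA : A.det = 1) :
    SplitOctonion F ≃ₗ[F] SplitOctonion F where
  toFun := slAction A
  invFun := slAction (adjugate A)
  map_add' x y := by ext <;> simp [slAction, mulVec_add]
  map_smul' c x := by ext <;> simp [slAction, mulVec_smul]
  left_inv := slAction_adjugate hA
  right_inv x := by
    have hA' : (adjugate A).det = 1 := by rw [det_adjugate, hA, one_pow]
    simpa only [adjugate_adjugate' A, hA, one_pow, one_smul] using slAction_adjugate hA' x

lemma isAlgAut_slEquiv {A : Matrix (Fin 3) (Fin 3) F} (hA : A.det = 1) :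
    IsAlgAut (slEquiv hA) := by
  refine ⟨by ext <;> simp [slEquiv, slAction], fun x y => ?_⟩
  have hcross : ∀ a b : Fin 3 → F,
      cross ((adjugate A)ᵀ *ᵥ a) ((adjugate A)ᵀ *ᵥ b) = A *ᵥ cross a b := by
    intro a b
    rw [cross_mulVec, ← adjugate_transpose, transpose_transpose, adjugate_adjugate' A, hA,
      one_pow, one_smul]
  ext
  · simp only [slEquiv, slAction, LinearEquiv.coe_mk, LinearMap.coe_mk, AddHom.coe_mk, mul_x1,
      dot_mulVec_adjugate_transpose_mulVec hA]
  · simp only [slEquiv, slAction, LinearEquiv.coe_mk, LinearMap.coe_mk, AddHom.coe_mk, mul_u,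
      mulVec_sub, mulVec_add, mulVec_smul, hcross]
  · simp only [slEquiv, slAction, LinearEquiv.coe_mk, LinearMap.coe_mk, AddHom.coe_mk, mul_v,
      mulVec_add, mulVec_smul, cross_mulVec]
  · simp only [slEquiv, slAction, LinearEquiv.coe_mk, LinearMap.coe_mk, AddHom.coe_mk, mul_x2]
    rw [dot_comm (_ *ᵥ x.v), dot_mulVec_adjugate_transpose_mulVec hA, dot_comm]

lemma autConj_mk_of_mulVec {A : Matrix (Fin 3) (Fin 3) F} (hA : A.det = 1) {a b : F}
    {u u' v v' : Fin 3 → F} (hu : A *ᵥ u = u') (hv : Aᵀ *ᵥ v' = v) :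
    AutConj ⟨a, u, v, b⟩ ⟨a, u', v', b⟩ := by
  refine ⟨slEquiv hA, isAlgAut_slEquiv hA, ?_⟩
  subst hu hv
  ext <;> simp only [slEquiv, slAction, LinearEquiv.coe_mk, LinearMap.coe_mk, AddHom.coe_mk,
    mulVec_mulVec, ← transpose_mul, mul_adjugate, hA, one_smul, transpose_one, one_mulVec]

lemma exists_det_eq_one_mulVec_eq {u : Fin 3 → F} (hu : u ≠ 0) :
    ∃ A : Matrix (Fin 3) (Fin 3) F, A.det = 1 ∧ A *ᵥ u = ![1, 0, 0] := by
  have hu' : u 0 ≠ 0 ∨ u 1 ≠ 0 ∨ u 2 ≠ 0 := by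
    by_contra! h
    exact hu (funext fun i => by fin_cases i <;> simp [h.1, h.2.1, h.2.2])
  rcases hu' with h | h | h
  · refine ⟨!![(u 0)⁻¹, 0, 0; -u 1, u 0, 0; -u 2 / u 0, 0, 1], ?_, ?_⟩
    · simp [det_fin_three, h]
    · ext i; fin_cases i <;> simp [mulVec, dotProduct, Fin.sum_univ_three, h]; ring
  · refine ⟨!![0, (u 1)⁻¹, 0; -u 1, u 0, 0; 0, -u 2 / u 1, 1], ?_, ?_⟩
    · simp [det_fin_three, h]
    · ext i; fin_cases i <;> simp [mulVec, dotProduct, Fin.sum_univ_three, h]; ring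
  · refine ⟨!![0, 0, (u 2)⁻¹; u 2, 0, -u 0; 0, 1, -u 1 / u 2], ?_, ?_⟩
    · simp [det_fin_three, h]
    · ext i; fin_cases i <;> simp [mulVec, dotProduct, Fin.sum_univ_three, h]; ring

lemma exists_det_eq_one_stabilizer_normal_form (w : Fin 3 → F) :
    ∃ A : Matrix (Fin 3) (Fin 3) F, A.det = 1 ∧ A *ᵥ ![1, 0, 0] = ![1, 0, 0] ∧
      (Aᵀ *ᵥ ![w 0, 0, 0] = w ∨ Aᵀ *ᵥ ![0, 1, 0] = w) := by
  by_cases h0 : w 0 = 0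
  · by_cases h1 : w 1 = 0
    · by_cases h2 : w 2 = 0
      · refine ⟨1, det_one, one_mulVec _, Or.inl ?_⟩
        ext i; fin_cases i <;> simp [h0, h1, h2]
      · refine ⟨!![1, 0, 0; 0, 0, w 2; 0, -(w 2)⁻¹, 0], ?_, ?_, Or.inr ?_⟩
        · simp [det_fin_three, h2]
        · ext i; fin_cases i <;> simp [mulVec, dotProduct, Fin.sum_univ_three]
        · ext i; fin_cases i <;> simp [mulVec, dotProduct, Fin.sum_univ_three, h0, h1]
    · refine ⟨!![1, 0, 0; 0, w 1, w 2; 0, 0, (w 1)⁻¹], ?_, ?_, Or.inr ?_⟩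
      · simp [det_fin_three, h1]
      · ext i; fin_cases i <;> simp [mulVec, dotProduct, Fin.sum_univ_three]
      · ext i; fin_cases i <;> simp [mulVec, dotProduct, Fin.sum_univ_three, h0]
  · refine ⟨!![1, w 1 / w 0, w 2 / w 0; 0, 1, 0; 0, 0, 1], ?_, ?_, Or.inl ?_⟩
    · simp [det_fin_three]
    · ext i; fin_cases i <;> simp [mulVec, dotProduct, Fin.sum_univ_three]
    · ext i; fin_cases i <;> simp [mulVec, dotProduct, Fin.sum_univ_three, h0]

lemma exists_det_eq_one_normal_form {u : Fin 3 → F} (hu : u ≠ 0) (v : Fin 3 → F) :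
    ∃ A : Matrix (Fin 3) (Fin 3) F, A.det = 1 ∧ A *ᵥ u = ![1, 0, 0] ∧
      (Aᵀ *ᵥ ![dot u v, 0, 0] = v ∨ Aᵀ *ᵥ ![0, 1, 0] = v) := by
  obtain ⟨A, hA, hAu⟩ := exists_det_eq_one_mulVec_eq hu
  set w := (adjugate A)ᵀ *ᵥ v
  have hw : Aᵀ *ᵥ w = v := by
    rw [mulVec_mulVec, ← transpose_mul, adjugate_mul, hA, one_smul, transpose_one, one_mulVec]
  have hw0 : w 0 = dot u v := by
    rw [← dot_mulVec_adjugate_transpose_mulVec hA, hAu]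
    simp [dot, w]
  obtain ⟨B, hB, hBe, hBw⟩ := exists_det_eq_one_stabilizer_normal_form w
  refine ⟨B * A, by rw [det_mul, hA, hB, one_mul], by rw [← mulVec_mulVec, hAu, hBe], ?_⟩
  rw [transpose_mul, ← mulVec_mulVec, ← mulVec_mulVec, ← hw0]
  rcases hBw with h | h
  · exact Or.inl (by rw [h, hw])
  · exact Or.inr (by rw [h, hw])

def companion (t q : F) : SplitOctonion F := ⟨0, ![1, 0, 0], ![-q, 0, 0], t⟩

@[simp] lemma trO_companion (t q : F) : trO (companion t q) = t := by simp [trO, companion]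
@[simp] lemma normO_companion (t q : F) : normO (companion t q) = q := by
  simp [normO, companion, dot]

lemma autConj_companion_of_quaternion (a b c : F) :
    AutConj ⟨a, ![1, 0, 0], ![c, 0, 0], b⟩ (companion (a + b) (a * b - c)) := by
  convert autConj_shear a _ using 1
  apply ext_coords <;> simp [companion, shear] <;> ring

/-- `(e₁, e₂)` and `(e₁, 0)` lie in different `SL₃(F)`-orbits of pairs `(u, v)`, so the swap and a
shear are needed to connect them. -/
lemma autConj_single_single (a b : F) :
    AutConj ⟨a, ![1, 0, 0], ![0, 1, 0], b⟩ ⟨a, ![1, 0, 0], ![0, 0, 0], b⟩ := by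
  have h₁ : AutConj ⟨a, ![1, 0, 0], ![0, 1, 0], b⟩ ⟨a, ![1, 0, 1], ![0, 1, 0], b⟩ :=
    autConj_mk_of_mulVec (A := !![1, 0, 0; 0, 1, 0; 1, 0, 1]) (by simp [det_fin_three])
      (by ext i; fin_cases i <;> simp [mulVec, dotProduct, Fin.sum_univ_three])
      (by ext i; fin_cases i <;> simp [mulVec, dotProduct, Fin.sum_univ_three])
  have h₂ : AutConj (⟨a, ![1, 0, 1], ![0, 1, 0], b⟩ : SplitOctonion F)
      ⟨a, ![1 + a - b, -1, 1], ![0, 0, 0], b⟩ := by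
    convert ((autConj_swap (⟨a, ![1, 0, 1], ![0, 1, 0], b⟩ : SplitOctonion F)).trans
      (autConj_shear 1 _)).trans (autConj_swap _) using 1
    apply ext_coords <;> simp [swap, shear]; ring
  obtain ⟨A, hA, hAu⟩ := exists_det_eq_one_mulVec_eq (u := ![1 + a - b, -1, (1 : F)])
    fun h => by simpa using congrFun h 2
  exact (h₁.trans h₂).trans (autConj_mk_of_mulVec hA hAu (by simp [← Matrix.zero_empty]))

lemma exists_autConj_quaternion {x : SplitOctonion F} (hu : x.u ≠ 0) :
    ∃ a b c : F, AutConj x ⟨a, ![1, 0, 0], ![c, 0, 0], b⟩ := by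
  obtain ⟨A, hA, hAu, hAv | hAv⟩ := exists_det_eq_one_normal_form hu x.v
  · exact ⟨x.x1, x.x2, _, autConj_mk_of_mulVec hA hAu hAv⟩
  · exact ⟨x.x1, x.x2, 0, (autConj_mk_of_mulVec hA hAu hAv).trans (autConj_single_single _ _)⟩

lemma exists_autConj_u_ne_zero {x : SplitOctonion F} (hx : ¬IsScalar x) :
    ∃ y, AutConj x y ∧ y.u ≠ 0 := by
  by_cases hu : x.u = 0
  swap
  · exact ⟨x, AutConj.refl x, hu⟩
  by_cases hv : x.v = 0
  swap
  · exact ⟨swap x, autConj_swap x, by simpa [swap] using hv⟩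
  have h12 : x.x2 - x.x1 ≠ 0 := fun h =>
    hx ⟨x.x1, by ext <;> simp [hu, hv, (sub_eq_zero.1 h).symm]⟩
  -- `shear 1` turns the diagonal `x` into one with `v 0 = x1 - x2`
  refine ⟨swap (shear 1 x), (autConj_shear 1 x).trans (autConj_swap _), fun h => h12 ?_⟩
  simpa [swap, shear, hu, hv] using congrFun h 0

theorem autConj_companion {x : SplitOctonion F} (hx : ¬IsScalar x) :
    AutConj x (companion (trO x) (normO x)) := by
  obtain ⟨y, hxy, hu⟩ := exists_autConj_u_ne_zero hx
  obtain ⟨a, b, c, hyz⟩ := exists_autConj_quaternion hu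
  have h := (hxy.trans hyz).trans (autConj_companion_of_quaternion a b c)
  obtain ⟨ht, hq⟩ := h.trO_eq_and_normO_eq
  rw [trO_companion] at ht
  rw [normO_companion] at hq
  rwa [ht, hq] at h

theorem autConj_of_trO_eq_of_normO_eq {x y : SplitOctonion F} (hx : ¬IsScalar x)
    (hy : ¬IsScalar y) (ht : trO x = trO y) (hq : normO x = normO y) : AutConj x y := by
  have h := autConj_companion hx
  rw [ht, hq] at h
  exact h.trans (autConj_companion hy).symm

open Polynomial in
lemma exists_mul_self_eq_mul_sub [IsAlgClosed F] (t q : F) : ∃ ξ : F, ξ * ξ = t * ξ - q := by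
  have hdeg : (X ^ 2 - C t * X + C q).degree = 2 := by compute_degree!
  obtain ⟨ξ, hξ⟩ := IsAlgClosed.exists_root (X ^ 2 - C t * X + C q) (by rw [hdeg]; decide)
  refine ⟨ξ, ?_⟩
  simp only [IsRoot, eval_add, eval_sub, eval_mul, eval_pow, eval_C, eval_X] at hξ
  linear_combination hξ

lemma trO_smul_e1_add_smul_e2 (a b : F) : trO (a • e1 + b • e2 : SplitOctonion F) = a + b := by
  simp [trO]

lemma normO_smul_e1_add_smul_e2 (a b : F) : normO (a • e1 + b • e2 : SplitOctonion F) = a * b := by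
  simp [normO, dot]

lemma not_isScalar_smul_e1_add_smul_e2 {a b : F} (h : a ≠ b) :
    ¬IsScalar (a • e1 + b • e2 : SplitOctonion F) := by
  rintro ⟨c, hc⟩
  exact h (by simpa using (congrArg x1 hc).trans (congrArg x2 hc).symm)

lemma trO_smul_one_add_u1 (ξ : F) : trO (ξ • 1 + u1 : SplitOctonion F) = ξ + ξ := by
  simp [trO]

lemma normO_smul_one_add_u1 (ξ : F) : normO (ξ • 1 + u1 : SplitOctonion F) = ξ * ξ := by
  simp [normO, dot]

lemma not_isScalar_smul_one_add_u1 (ξ : F) : ¬IsScalar (ξ • 1 + u1 : SplitOctonion F) := by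
  rintro ⟨c, hc⟩
  simpa using congrFun (congrArg u hc) 0

theorem isScalar_or_autConj [IsAlgClosed F] (x : SplitOctonion F) :
    IsScalar x ∨ (∃ ξ₁ ξ₂ : F, ξ₁ ≠ ξ₂ ∧ AutConj (ξ₁ • e1 + ξ₂ • e2) x) ∨
      ∃ ξ : F, AutConj (ξ • 1 + u1) x := by
  by_cases hx : IsScalar x
  · exact Or.inl hx
  obtain ⟨ξ, hξ⟩ := exists_mul_self_eq_mul_sub (trO x) (normO x)
  have hq : ξ * (trO x - ξ) = normO x := by linear_combination -hξ
  by_cases hne : ξ = trO x - ξ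
  · refine Or.inr (Or.inr ⟨ξ, autConj_of_trO_eq_of_normO_eq (not_isScalar_smul_one_add_u1 ξ) hx
      ?_ ?_⟩)
    · rw [trO_smul_one_add_u1]
      linear_combination hne
    · rw [normO_smul_one_add_u1, ← hq, ← hne]
  · exact Or.inr (Or.inl ⟨ξ, trO x - ξ, hne, autConj_of_trO_eq_of_normO_eq
      (not_isScalar_smul_e1_add_smul_e2 hne) hx (by rw [trO_smul_e1_add_smul_e2]; ring)
      (by rw [normO_smul_e1_add_smul_e2, hq])⟩)

lemma smul_one_pow (c : F) : ∀ k : ℕ, (c • 1 : SplitOctonion F) ^ k = c ^ k • 1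
  | 0 => by rw [SplitOctonion.pow_zero, pow_zero, one_smul]
  | k + 1 => by
    rw [SplitOctonion.pow_succ, smul_one_pow c k]
    apply ext_coords <;> simp [pow_succ]

lemma smul_e1_add_smul_e2_pow (a b : F) :
    ∀ k : ℕ, (a • e1 + b • e2 : SplitOctonion F) ^ k = a ^ k • e1 + b ^ k • e2
  | 0 => by apply ext_coords <;> simp [SplitOctonion.pow_zero]
  | k + 1 => by
    rw [SplitOctonion.pow_succ, smul_e1_add_smul_e2_pow a b k]
    apply ext_coords <;> simp [pow_succ]

lemma smul_one_add_u1_pow (ξ : F) :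
    ∀ k : ℕ, (ξ • 1 + u1 : SplitOctonion F) ^ (k + 1) = ξ ^ (k + 1) • 1 + ((k + 1) * ξ ^ k) • u1
  | 0 => by apply ext_coords <;> simp [SplitOctonion.pow_succ, SplitOctonion.pow_zero]
  | k + 1 => by
    rw [SplitOctonion.pow_succ, smul_one_add_u1_pow ξ k]
    apply ext_coords <;> simp [pow_succ]; ring

lemma smul_one_pow_eq_smul_one_iff (c γ : F) (n : ℕ) :
    (c • 1 : SplitOctonion F) ^ n = γ • 1 ↔ c ^ n = γ := by
  rw [smul_one_pow, smul_one_inj]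

lemma smul_e1_add_smul_e2_pow_eq_smul_one_iff (a b γ : F) (n : ℕ) :
    (a • e1 + b • e2 : SplitOctonion F) ^ n = γ • 1 ↔ a ^ n = γ ∧ b ^ n = γ := by
  rw [smul_e1_add_smul_e2_pow]
  refine ⟨fun h => ⟨by simpa using congrArg x1 h, by simpa using congrArg x2 h⟩, ?_⟩
  rintro ⟨rfl, h⟩
  apply ext_coords <;> simp [h]

lemma smul_one_add_u1_pow_eq_smul_one_iff {n : ℕ} (hn : 1 < n) (ξ γ : F) :
    (ξ • 1 + u1 : SplitOctonion F) ^ n = γ • 1 ↔ ξ ^ n = γ ∧ ((n : F) = 0 ∨ γ = 0) := by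
  obtain ⟨m, rfl⟩ : ∃ m, n = m + 1 := ⟨n - 1, by omega⟩
  have hm : m ≠ 0 := by omega
  rw [smul_one_add_u1_pow, Nat.cast_succ]
  constructor
  · intro h
    have h₁ : ξ ^ (m + 1) = γ := by simpa using congrArg x1 h
    have h₂ : ((m : F) + 1) * ξ ^ m = 0 := by simpa using congrFun (congrArg u h) 0
    refine ⟨h₁, (mul_eq_zero.1 h₂).imp_right fun hξ => ?_⟩
    rw [← h₁, pow_eq_zero_iff hm |>.1 hξ, zero_pow (Nat.succ_ne_zero m)]
  · rintro ⟨rfl, h | h⟩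
    · apply ext_coords <;> simp [h]
    · obtain rfl : ξ = 0 := pow_eq_zero_iff (Nat.succ_ne_zero m) |>.1 h
      apply ext_coords <;> simp [hm]

end SplitOctonion

open SplitOctonion in
/-- the `n`-th roots of a scalar octonion `γ·1`. -/
theorem pow_eq_smul_one_iff {F : Type*} [Field F] [IsAlgClosed F]
    (n : ℕ) (hn : 1 < n) (γ : F) (x : SplitOctonion F) :
    x ^ n = γ • (1 : SplitOctonion F) ↔
      (∃ ξ₁ : F, ξ₁ ^ n = γ ∧ x = ξ₁ • (1 : SplitOctonion F)) ∨
      (∃ ξ₁ ξ₂ : F, ξ₁ ≠ ξ₂ ∧ ξ₁ ^ n = γ ∧ ξ₂ ^ n = γ ∧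
        ∃ g : SplitOctonion F ≃ₗ[F] SplitOctonion F, IsAlgAut g ∧
          x = g (ξ₁ • e1 + ξ₂ • e2)) ∨
      (((n : F) = 0 ∨ γ = 0) ∧ ∃ ξ₁ : F, ξ₁ ^ n = γ ∧
        ∃ g : SplitOctonion F ≃ₗ[F] SplitOctonion F, IsAlgAut g ∧
          x = g (ξ₁ • (1 : SplitOctonion F) + u1)) := by
  constructor
  · intro h
    rcases isScalar_or_autConj x with ⟨ξ, rfl⟩ | ⟨ξ₁, ξ₂, hne, hx⟩ | ⟨ξ, hx⟩
    · exact Or.inl ⟨ξ, (smul_one_pow_eq_smul_one_iff ξ γ n).1 h, rfl⟩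
    · obtain ⟨h₁, h₂⟩ := (smul_e1_add_smul_e2_pow_eq_smul_one_iff ξ₁ ξ₂ γ n).1
        ((hx.pow_eq_smul_one_iff n γ).1 h)
      exact Or.inr (Or.inl ⟨ξ₁, ξ₂, hne, h₁, h₂, hx⟩)
    · obtain ⟨hξ, hnγ⟩ := (smul_one_add_u1_pow_eq_smul_one_iff hn ξ γ).1
        ((hx.pow_eq_smul_one_iff n γ).1 h)
      exact Or.inr (Or.inr ⟨hnγ, ξ, hξ, hx⟩)
  · rintro (⟨ξ, hξ, rfl⟩ | ⟨ξ₁, ξ₂, -, h₁, h₂, hx⟩ | ⟨hnγ, ξ, hξ, hx⟩)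
    · exact (smul_one_pow_eq_smul_one_iff ξ γ n).2 hξ
    · exact (AutConj.pow_eq_smul_one_iff hx n γ).2
        ((smul_e1_add_smul_e2_pow_eq_smul_one_iff ξ₁ ξ₂ γ n).2 ⟨h₁, h₂⟩)
    · exact (AutConj.pow_eq_smul_one_iff hx n γ).2
        ((smul_one_add_u1_pow_eq_smul_one_iff hn ξ γ).2 ⟨hξ, hnγ⟩)
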